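/- Let A ⊆ ℤ^d be asymptotically measurable and let p_N, q_N be nondecreasing sequences of positive integers with q_N → ∞, q_N/p_N → 0 and p_N/N → 0; set k_N = ⌊(2N+1)/(p_N+q_N)⌋ and let Δ_N(1), …, Δ_N(k_N^d) be the Bernshtein cubes of side p_N+1 in [−N,N]^d. Then for every k ∈ ℤ^d: (a) 0 ≤ Σ_{ℓ=1}^{k_N^d} H_N(k; A ∩ Δ_N(ℓ)) ≤ 1 for all N; and (b) Σ_{ℓ=1}^{k_N^d} H_N(k; A ∩ Δ_N(ℓ)) → H(k;A) as N → ∞. -/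

import Mathlib

/-!
Write `C(B) = B_N ∩ (κ + B_N)`, so that `H_N(κ; B) = #C(B) / (2N+1)^d`. The Bernshtein cubes are
disjoint, so the sets `C(A ∩ Δ_N(j))` are disjoint subsets of `C(A)`: the block sum is at most
`H_N(κ; A) ≤ 1`. Conversely, a point of `C(A)` in the core of some `Δ_N(j)` (the points at distance
at least `‖κ‖` from its complement) lies in `C(A ∩ Δ_N(j))`, so the block sum falls short of
`H_N(κ; A)` by at most the proportion `1 - (k_N (p_N + 1 - 2‖κ‖) / (2N+1))^d` of `[-N,N]^d` outside
the cores. This tends to `0`, because `k_N (p_N + q_N) ~ 2N + 1` (as `p_N / N → 0`) and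
`(p_N + 1 - 2‖κ‖) / (p_N + q_N) → 1` (as `q_N / p_N → 0`, which also forces `p_N → ∞`).
-/

open MeasureTheory ProbabilityTheory Filter
open scoped ENNReal NNReal

noncomputable section

/-- The discrete cube `[-N,N]^d ⊆ ℤ^d` as a finset. -/
def intCube (d N : ℕ) : Finset (Fin d → ℤ) :=
  Fintype.piFinset fun _ => Finset.Icc (-(N : ℤ)) (N : ℤ)

open Classical in
/-- `A_N = A ∩ [-N,N]^d` as a finset. -/
def restr (d : ℕ) (A : Set (Fin d → ℤ)) (N : ℕ) : Finset (Fin d → ℤ) :=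
  (intCube d N).filter fun n => n ∈ A

/-- The normalized partial sum `S_N(A,X) = (2N+1)^{-d/2} ∑_{n ∈ A_N} X_n`. -/
def SN {Ω : Type*} (d N : ℕ) (A : Set (Fin d → ℤ)) (X : (Fin d → ℤ) → Ω → ℝ)
    (ω : Ω) : ℝ :=
  (Real.sqrt ((2 * N + 1) ^ d))⁻¹ * ∑ n ∈ restr d A N, X n ω

/-- `H_N(k;A) = card(A_N ∩ (k + A_N)) / (2N+1)^d`. -/
def HN (d : ℕ) (A : Set (Fin d → ℤ)) (N : ℕ) (k : Fin d → ℤ) : ℝ :=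
  ((restr d A N ∩ (restr d A N).image (k + ·)).card : ℝ) / (2 * N + 1 : ℝ) ^ d

/-- The sup-norm `‖k‖ = max_i |k_i|` on `ℤ^d`, as a natural number. -/
def supNormZ {d : ℕ} (k : Fin d → ℤ) : ℕ :=
  Finset.univ.sup fun i => (k i).natAbs

/-- `dist(A,B) ≥ r` in the sup-norm. -/
def setDistGe {d : ℕ} (A B : Set (Fin d → ℤ)) (r : ℝ) : Prop :=
  ∀ a ∈ A, ∀ b ∈ B, r ≤ (supNormZ (a - b) : ℝ)

/-- `A` is asymptotically measurable with limit function `Hlim`. -/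
def IsAM (d : ℕ) (A : Set (Fin d → ℤ)) (Hlim : (Fin d → ℤ) → ℝ) : Prop :=
  ∀ k, Tendsto (fun N => HN d A N k) atTop (nhds (Hlim k)) ∧ 0 < Hlim k ∧ Hlim k < 1

/-- The truncation of the field `X` at level `J`:
`X^J_n = X_n·1_{|X_n|≤J} − E[X_n·1_{|X_n|≤J}]`. -/
def truncF {Ω : Type*} [MeasureSpace Ω] {d : ℕ} (X : (Fin d → ℤ) → Ω → ℝ) (J : ℝ)
    (n : Fin d → ℤ) (ω : Ω) : ℝ :=
  (if |X n ω| ≤ J then X n ω else 0) - ∫ ω', if |X n ω'| ≤ J then X n ω' else 0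

/-- The covariance function `r^X(k) = E[X_0 X_k]`. -/
def covF {Ω : Type*} [MeasureSpace Ω] {d : ℕ} (X : (Fin d → ℤ) → Ω → ℝ)
    (k : Fin d → ℤ) : ℝ :=
  ∫ ω, X 0 ω * X k ω

/-- Strict stationarity of a random field: for every `k` the shifted family has the
same joint distribution as the original one. -/
def StrictStat {Ω : Type*} [MeasureSpace Ω] {d : ℕ} (X : (Fin d → ℤ) → Ω → ℝ) : Prop :=
  ∀ k : Fin d → ℤ,
    Measure.map (fun ω (n : Fin d → ℤ) => X (n + k) ω) (ℙ : Measure Ω)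
      = Measure.map (fun ω (n : Fin d → ℤ) => X n ω) (ℙ : Measure Ω)

/-- `m`-dependence: families indexed by finite sets at sup-norm distance `> m`
are independent. -/
def MDep {Ω : Type*} [MeasureSpace Ω] {d : ℕ} (m : ℕ) (X : (Fin d → ℤ) → Ω → ℝ) : Prop :=
  ∀ S T : Finset (Fin d → ℤ),
    (∀ s ∈ S, ∀ t ∈ T, (m : ℝ) < (supNormZ (s - t) : ℝ)) →
      IndepFun (fun ω (s : S) => X s.1 ω) (fun ω (t : T) => X t.1 ω) ℙ

/-- Convergence in distribution to a centered Gaussian with variance `v`. -/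
def WeakToGaussian {Ω : Type*} [MeasureSpace Ω] (Y : ℕ → Ω → ℝ) (v : ℝ≥0) : Prop :=
  ∀ f : BoundedContinuousFunction ℝ ℝ,
    Tendsto (fun N => ∫ ω, f (Y N ω)) atTop (nhds (∫ x, f x ∂gaussianReal 0 v))

end

section ShiftOverlap

variable {G ι : Type*} [AddCommGroup G] [DecidableEq G]

def shiftOverlap (S : Finset G) (k : G) : Finset G :=
  S ∩ S.image (k + ·)

theorem mem_shiftOverlap {S : Finset G} {k x : G} :
    x ∈ shiftOverlap S k ↔ x ∈ S ∧ x - k ∈ S := by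
  simp only [shiftOverlap, Finset.mem_inter, Finset.mem_image]
  constructor
  · rintro ⟨hx, y, hy, rfl⟩
    exact ⟨hx, by simpa using hy⟩
  · rintro ⟨hx, hxk⟩
    exact ⟨hx, x - k, hxk, by abel⟩

theorem shiftOverlap_mono {S T : Finset G} (h : S ⊆ T) (k : G) :
    shiftOverlap S k ⊆ shiftOverlap T k := fun x hx => by
  rw [mem_shiftOverlap] at hx ⊢
  exact ⟨h hx.1, h hx.2⟩

theorem shiftOverlap_inter_subset_right (S B : Finset G) (k : G) :
    shiftOverlap (S ∩ B) k ⊆ B :=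
  fun _ hx => (Finset.mem_inter.mp (mem_shiftOverlap.mp hx).1).2

theorem card_biUnion_shiftOverlap_inter {s : Finset ι} {B : ι → Finset G}
    (hB : (s : Set ι).PairwiseDisjoint B) (S : Finset G) (k : G) :
    (s.biUnion fun j => shiftOverlap (S ∩ B j) k).card =
      ∑ j ∈ s, (shiftOverlap (S ∩ B j) k).card :=
  Finset.card_biUnion fun _ hj _ hj' hne =>
    (hB hj hj' hne).mono (shiftOverlap_inter_subset_right S _ k)
      (shiftOverlap_inter_subset_right S _ k)

theorem sum_card_shiftOverlap_inter_le {s : Finset ι} {B : ι → Finset G}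
    (hB : (s : Set ι).PairwiseDisjoint B) (S : Finset G) (k : G) :
    ∑ j ∈ s, (shiftOverlap (S ∩ B j) k).card ≤ (shiftOverlap S k).card := by
  rw [← card_biUnion_shiftOverlap_inter hB]
  exact Finset.card_le_card (Finset.biUnion_subset.mpr fun j _ =>
    shiftOverlap_mono Finset.inter_subset_left k)

/-- The overlap points lost by cutting `S` along the blocks `B j` lie outside the cores `E j`. -/
theorem card_shiftOverlap_add_sum_card_le {s : Finset ι} {B E : ι → Finset G}
    (hB : (s : Set ι).PairwiseDisjoint B) {S U : Finset G} {k : G}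
    (hEB : ∀ j ∈ s, E j ⊆ B j) (hEk : ∀ j ∈ s, ∀ x ∈ E j, x - k ∈ B j)
    (hSU : S ⊆ U) (hEU : ∀ j ∈ s, E j ⊆ U) :
    (shiftOverlap S k).card + ∑ j ∈ s, (E j).card ≤
      ∑ j ∈ s, (shiftOverlap (S ∩ B j) k).card + U.card := by
  have hE : (s : Set ι).PairwiseDisjoint E := fun j hj j' hj' hne =>
    (hB hj hj' hne).mono (hEB j hj) (hEB j' hj')
  have h_inter : shiftOverlap S k ∩ s.biUnion E ⊆
      s.biUnion fun j => shiftOverlap (S ∩ B j) k := by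
    intro x hx
    obtain ⟨hxS, hxE⟩ := Finset.mem_inter.mp hx
    obtain ⟨j, hj, hxj⟩ := Finset.mem_biUnion.mp hxE
    rw [mem_shiftOverlap] at hxS
    refine Finset.mem_biUnion.mpr ⟨j, hj, mem_shiftOverlap.mpr ⟨?_, ?_⟩⟩
    · exact Finset.mem_inter.mpr ⟨hxS.1, hEB j hj hxj⟩
    · exact Finset.mem_inter.mpr ⟨hxS.2, hEk j hj x hxj⟩
  have h_union : shiftOverlap S k ∪ s.biUnion E ⊆ U :=
    Finset.union_subset ((shiftOverlap_mono hSU k).trans Finset.inter_subset_left)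
      (Finset.biUnion_subset.mpr hEU)
  rw [← Finset.card_biUnion hE, ← card_biUnion_shiftOverlap_inter hB,
    ← Finset.card_inter_add_card_union]
  exact add_le_add (Finset.card_le_card h_inter) (Finset.card_le_card h_union)

end ShiftOverlap

section Bernshtein

variable {d : ℕ} (N p q : ℕ)

noncomputable def bernshteinStart (j : ℕ) : ℤ :=
  -(N : ℤ) + (j : ℤ) * ((p : ℤ) + q)

noncomputable def bernshteinCube (j : Fin d → ℕ) : Finset (Fin d → ℤ) :=
  Fintype.piFinset fun i =>
    Finset.Icc (bernshteinStart N p q (j i)) (bernshteinStart N p q (j i) + p)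

noncomputable def bernshteinCore (M : ℕ) (j : Fin d → ℕ) : Finset (Fin d → ℤ) :=
  Fintype.piFinset fun i =>
    Finset.Icc (bernshteinStart N p q (j i) + M) (bernshteinStart N p q (j i) + p - M)

variable {N p q}

theorem disjoint_Icc_bernshteinStart (hq : 0 < q) {a b : ℕ} (h : a < b) :
    Disjoint (Finset.Icc (bernshteinStart N p q a) (bernshteinStart N p q a + p))
      (Finset.Icc (bernshteinStart N p q b) (bernshteinStart N p q b + p)) := by
  have hab : ((a : ℤ) + 1) * ((p : ℤ) + q) ≤ (b : ℤ) * ((p : ℤ) + q) :=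
    mul_le_mul_of_nonneg_right (by exact_mod_cast h) (by positivity)
  rw [Finset.disjoint_left]
  intro x hxa hxb
  simp only [Finset.mem_Icc, bernshteinStart] at hxa hxb
  have : (0 : ℤ) < q := by exact_mod_cast hq
  linarith

theorem pairwiseDisjoint_bernshteinCube (hq : 0 < q) (s : Set (Fin d → ℕ)) :
    s.PairwiseDisjoint (bernshteinCube (d := d) N p q) := by
  intro j _ j' _ hne
  obtain ⟨i, hi⟩ := Function.ne_iff.mp hne
  rcases lt_or_gt_of_ne hi with h | h
  · exact Fintype.piFinset_disjoint_of_disjoint _ _ (disjoint_Icc_bernshteinStart hq h)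
  · exact Fintype.piFinset_disjoint_of_disjoint _ _ (disjoint_Icc_bernshteinStart hq h).symm

theorem bernshteinCube_subset_intCube (hq : 0 < q) {K : ℕ} (hK : K * (p + q) ≤ 2 * N + 1)
    {j : Fin d → ℕ} (hj : ∀ i, j i < K) : bernshteinCube N p q j ⊆ intCube d N := by
  refine Fintype.piFinset_subset _ _ fun i x hx => ?_
  have hji : ((j i : ℤ) + 1) * ((p : ℤ) + q) ≤ 2 * N + 1 := by
    exact_mod_cast (Nat.mul_le_mul_right (p + q) (hj i)).trans hK
  have : 0 ≤ (j i : ℤ) * ((p : ℤ) + q) := by positivity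
  have : (0 : ℤ) < q := by exact_mod_cast hq
  simp only [Finset.mem_Icc, bernshteinStart] at hx ⊢
  constructor <;> nlinarith

theorem bernshteinCore_subset_bernshteinCube (M : ℕ) (j : Fin d → ℕ) :
    bernshteinCore N p q M j ⊆ bernshteinCube N p q j :=
  Fintype.piFinset_subset _ _ fun _ => Finset.Icc_subset_Icc (by omega) (by omega)

theorem sub_mem_bernshteinCube {M : ℕ} {k : Fin d → ℤ} (hk : supNormZ k ≤ M) {j : Fin d → ℕ}
    {x : Fin d → ℤ} (hx : x ∈ bernshteinCore N p q M j) : x - k ∈ bernshteinCube N p q j := by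
  rw [bernshteinCore, Fintype.mem_piFinset] at hx
  refine Fintype.mem_piFinset.mpr fun i => ?_
  have hki : |k i| ≤ M := by
    rw [Int.abs_eq_natAbs]
    exact_mod_cast (Finset.le_sup (f := fun i => (k i).natAbs) (Finset.mem_univ i)).trans hk
  have := Finset.mem_Icc.mp (hx i)
  rw [Pi.sub_apply, Finset.mem_Icc]
  constructor <;> linarith [abs_le.mp hki]

theorem card_bernshteinCore {M : ℕ} (hM : 2 * M ≤ p) (j : Fin d → ℕ) :
    (bernshteinCore N p q M j).card = (p + 1 - 2 * M) ^ d := by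
  have h (a : ℤ) : (a + p - M + 1 - (a + M)).toNat = p + 1 - 2 * M := by omega
  simp [bernshteinCore, Fintype.card_piFinset, h]

end Bernshtein

section BlockSums

variable {d : ℕ} (A : Set (Fin d → ℤ)) (N : ℕ) (k : Fin d → ℤ)

theorem HN_eq_card_shiftOverlap :
    HN d A N k = (shiftOverlap (restr d A N) k).card / (2 * N + 1 : ℝ) ^ d :=
  rfl

theorem restr_inter_coe (s : Finset (Fin d → ℤ)) : restr d (A ∩ ↑s) N = restr d A N ∩ s := by
  ext n
  simp only [restr, Finset.mem_filter, Finset.mem_inter, Set.mem_inter_iff, Finset.mem_coe]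
  tauto

theorem restr_subset_intCube : restr d A N ⊆ intCube d N := by
  classical
  exact Finset.filter_subset _ _

theorem card_intCube : (intCube d N).card = (2 * N + 1) ^ d := by
  have h : ((N : ℤ) + 1 + N).toNat = 2 * N + 1 := by omega
  simp [intCube, Fintype.card_piFinset, h]

theorem HN_nonneg : 0 ≤ HN d A N k := by
  rw [HN]; positivity

theorem HN_le_one : HN d A N k ≤ 1 := by
  rw [HN_eq_card_shiftOverlap, div_le_one (by positivity)]
  have := Finset.card_le_card <|
    (shiftOverlap_mono (restr_subset_intCube A N) k).trans Finset.inter_subset_left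
  rw [card_intCube] at this
  exact_mod_cast this

variable {N} {p q K : ℕ}

theorem sum_HN_inter_bernshteinCube_le (hq : 0 < q) :
    ∑ j ∈ Fintype.piFinset (fun _ : Fin d => Finset.range K),
      HN d (A ∩ ↑(bernshteinCube N p q j)) N k ≤ HN d A N k := by
  simp only [HN_eq_card_shiftOverlap, restr_inter_coe, ← Finset.sum_div]
  gcongr
  exact_mod_cast sum_card_shiftOverlap_inter_le (pairwiseDisjoint_bernshteinCube hq _) _ k

theorem HN_sub_le_sum_HN_inter_bernshteinCube (hq : 0 < q) (hK : K * (p + q) ≤ 2 * N + 1)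
    (hM : 2 * supNormZ k ≤ p) :
    HN d A N k - (1 - ((K : ℝ) * (p + 1 - 2 * supNormZ k) / (2 * N + 1)) ^ d) ≤
      ∑ j ∈ Fintype.piFinset (fun _ : Fin d => Finset.range K),
        HN d (A ∩ ↑(bernshteinCube N p q j)) N k := by
  set M := supNormZ k
  set s := Fintype.piFinset fun _ : Fin d => Finset.range K
  have hs : ∀ j ∈ s, ∀ i, j i < K := fun j hj i =>
    Finset.mem_range.mp (Fintype.mem_piFinset.mp hj i)
  have hcount := card_shiftOverlap_add_sum_card_le
    (pairwiseDisjoint_bernshteinCube hq (s : Set (Fin d → ℕ))) (E := bernshteinCore N p q M)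
    (fun j _ => bernshteinCore_subset_bernshteinCube M j)
    (fun _ _ _ hx => sub_mem_bernshteinCube le_rfl hx) (restr_subset_intCube A N)
    (fun j hj => (bernshteinCore_subset_bernshteinCube M j).trans
      (bernshteinCube_subset_intCube hq hK (hs j hj)))
  simp only [card_bernshteinCore hM, Finset.sum_const, s, Fintype.card_piFinset,
    Finset.card_range, Finset.prod_const, Finset.card_univ, Fintype.card_fin, smul_eq_mul,
    card_intCube, ← mul_pow] at hcount
  have hcast : ((K * (p + 1 - 2 * M) : ℕ) : ℝ) = K * (p + 1 - 2 * M) := by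
    push_cast [Nat.cast_sub (by omega : 2 * M ≤ p + 1)]
    ring
  have hT : (0 : ℝ) < (2 * N + 1) ^ d := by positivity
  replace hcount : (shiftOverlap (restr d A N) k).card + ((K : ℝ) * (p + 1 - 2 * M)) ^ d ≤
      ∑ j ∈ s, ((shiftOverlap (restr d A N ∩ bernshteinCube N p q j) k).card : ℝ) +
        (2 * N + 1) ^ d := by
    rw [← hcast]
    exact_mod_cast hcount
  simp only [HN_eq_card_shiftOverlap, restr_inter_coe, ← Finset.sum_div, div_pow,
    one_sub_div hT.ne', ← sub_div]
  gcongr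
  linarith

end BlockSums

section Asymptotics

open Topology

variable {α : Type*} {l : Filter α}

theorem tendsto_natDiv_mul_div_self {m n : α → ℕ} (hm : ∀ a, 0 < m a) (hn : ∀ a, 0 < n a)
    (h : Tendsto (fun a => (m a : ℝ) / n a) l (𝓝 0)) :
    Tendsto (fun a => ((n a / m a * m a : ℕ) : ℝ) / n a) l (𝓝 1) := by
  refine tendsto_of_tendsto_of_tendsto_of_le_of_le (g := fun a => 1 - (m a : ℝ) / n a)
    (by simpa using tendsto_const_nhds.sub h) tendsto_const_nhds (fun a => ?_) (fun a => ?_)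
  · have hn' : (0 : ℝ) < n a := by exact_mod_cast hn a
    have : (n a : ℝ) < (n a / m a * m a : ℕ) + m a := by exact_mod_cast Nat.lt_div_mul_add (hm a)
    show 1 - (m a : ℝ) / n a ≤ _
    rw [one_sub_div hn'.ne']
    gcongr
    linarith
  · exact div_le_one_of_le₀ (Nat.cast_le.mpr (Nat.div_mul_le_self _ _)) (Nat.cast_nonneg _)

theorem tendsto_natCast_atTop_of_div_tendsto_zero {p q : α → ℕ} (hp : ∀ a, 0 < p a)
    (hq : ∀ a, 0 < q a) (hqp : Tendsto (fun a => (q a : ℝ) / p a) l (𝓝 0)) :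
    Tendsto (fun a => (p a : ℝ)) l atTop := by
  have hinv : Tendsto (fun a => (p a : ℝ)⁻¹) l (𝓝[>] 0) := by
    refine tendsto_nhdsWithin_iff.mpr ⟨squeeze_zero (fun a => by positivity) (fun a => ?_) hqp,
      Eventually.of_forall fun a => by simpa using hp a⟩
    rw [inv_eq_one_div]
    gcongr
    exact_mod_cast hq a
  simpa only [Pi.inv_def, inv_inv] using hinv.inv_tendsto_nhdsGT_zero

variable {p q : ℕ → ℕ}

/-- The proportion of `[-N, N]` covered by the `k_N` Bernshtein intervals shrunk by `M` at
both ends tends to `1`. -/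
theorem tendsto_bernshtein_fraction (hp : ∀ N, 0 < p N) (hq : ∀ N, 0 < q N)
    (hqp : Tendsto (fun N => (q N : ℝ) / p N) atTop (𝓝 0))
    (hpN : Tendsto (fun N => (p N : ℝ) / N) atTop (𝓝 0)) (M : ℕ) :
    Tendsto (fun N => (((2 * N + 1) / (p N + q N) : ℕ) : ℝ) * (p N + 1 - 2 * M) / (2 * N + 1))
      atTop (𝓝 1) := by
  have hp' : ∀ N, (0 : ℝ) < p N := fun N => by exact_mod_cast hp N
  have hpq_small : Tendsto (fun N => ((p N + q N : ℕ) : ℝ) / (2 * N + 1 : ℕ)) atTop (𝓝 0) := by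
    refine squeeze_zero' (Eventually.of_forall fun N => by positivity) ?_
      (by simpa using hpN.mul ((tendsto_const_nhds (x := (1 : ℝ))).add hqp))
    filter_upwards [eventually_gt_atTop 0] with N hN
    have hN' : (0 : ℝ) < N := by exact_mod_cast hN
    calc ((p N + q N : ℕ) : ℝ) / (2 * N + 1 : ℕ) ≤ (p N + q N) / N := by
          push_cast
          gcongr
          linarith
      _ = p N / N * (1 + q N / p N) := by field_simp [(hp' N).ne']
  have hside : Tendsto (fun N => ((p N : ℝ) + 1 - 2 * M) / (p N + q N)) atTop (𝓝 1) := by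
    have hptop := tendsto_natCast_atTop_of_div_tendsto_zero hp hq hqp
    have := (tendsto_const_nhds (x := (1 : ℝ)).add
      (tendsto_const_nhds (x := 1 - 2 * (M : ℝ)).div_atTop hptop)).div
        ((tendsto_const_nhds (x := (1 : ℝ))).add hqp) (by norm_num)
    simp only [add_zero, div_one] at this
    refine this.congr fun N => ?_
    simp only [Pi.div_apply]
    field_simp [(hp' N).ne']
    ring
  have hcount := tendsto_natDiv_mul_div_self (fun N => Nat.add_pos_left (hp N) _)
    (fun N => by positivity) hpq_small
  refine Tendsto.congr (fun N => ?_) (by simpa using hcount.mul hside)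
  have : (p N : ℝ) + q N ≠ 0 := (add_pos_of_pos_of_nonneg (hp' N) (Nat.cast_nonneg _)).ne'
  field_simp

theorem HN_block_sums_converge_general
    {d : ℕ} (A : Set (Fin d → ℤ)) (Hlim : (Fin d → ℤ) → ℝ) (hA : IsAM d A Hlim)
    (p q : ℕ → ℕ)
    (hp : ∀ N, 0 < p N) (hq : ∀ N, 0 < q N)
    (hqp : Tendsto (fun N => (q N : ℝ) / (p N : ℝ)) atTop (nhds 0))
    (hpN : Tendsto (fun N => (p N : ℝ) / (N : ℝ)) atTop (nhds 0))
    (kb : ℕ → ℕ) (hkb : ∀ N, kb N = (2 * N + 1) / (p N + q N))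
    (Δ : (N : ℕ) → (Fin d → ℕ) → Finset (Fin d → ℤ))
    (hΔ : ∀ N j, Δ N j = Fintype.piFinset fun i =>
      Finset.Icc (-(N : ℤ) + (j i : ℤ) * ((p N : ℤ) + q N))
        (-(N : ℤ) + (j i : ℤ) * ((p N : ℤ) + q N) + p N))
    (κ : Fin d → ℤ) :
    (∀ N : ℕ,
      0 ≤ (∑ j ∈ Fintype.piFinset fun _ : Fin d => Finset.range (kb N),
            HN d (A ∩ ↑(Δ N j)) N κ) ∧
      (∑ j ∈ Fintype.piFinset fun _ : Fin d => Finset.range (kb N),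
            HN d (A ∩ ↑(Δ N j)) N κ) ≤ 1) ∧
    Tendsto
      (fun N => ∑ j ∈ Fintype.piFinset fun _ : Fin d => Finset.range (kb N),
        HN d (A ∩ ↑(Δ N j)) N κ)
      atTop (nhds (Hlim κ)) := by
  obtain rfl : Δ = fun N => bernshteinCube N (p N) (q N) := funext fun N => funext (hΔ N)
  beta_reduce
  have hupper N := sum_HN_inter_bernshteinCube_le A κ (N := N) (p := p N) (K := kb N) (hq N)
  refine ⟨fun N => ⟨Finset.sum_nonneg fun _ _ => HN_nonneg _ _ _,
    (hupper N).trans (HN_le_one _ _ _)⟩, ?_⟩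
  have hlower : ∀ᶠ N in atTop, HN d A N κ - (1 - ((kb N : ℝ) * (p N + 1 - 2 * supNormZ κ) /
      (2 * N + 1)) ^ d) ≤ ∑ j ∈ Fintype.piFinset fun _ : Fin d => Finset.range (kb N),
        HN d (A ∩ ↑(bernshteinCube N (p N) (q N) j)) N κ := by
    filter_upwards [(tendsto_natCast_atTop_of_div_tendsto_zero hp hq hqp).eventually_ge_atTop
      (2 * supNormZ κ : ℝ)] with N hN
    exact HN_sub_le_sum_HN_inter_bernshteinCube A κ (hq N) (hkb N ▸ Nat.div_mul_le_self _ _)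
      (by exact_mod_cast hN)
  have hlim := (hA κ).1.sub ((tendsto_const_nhds (x := (1 : ℝ))).sub
    ((tendsto_bernshtein_fraction hp hq hqp hpN (supNormZ κ)).pow d))
  simp only [← hkb, one_pow, sub_self, sub_zero] at hlim
  exact tendsto_of_tendsto_of_tendsto_of_le_of_le' hlim (hA κ).1 hlower
    (Eventually.of_forall hupper)

/-- **Convergence of the block sums of `H_N` for an AM set.** -/
theorem HN_block_sums_converge
    {d : ℕ} (A : Set (Fin d → ℤ)) (Hlim : (Fin d → ℤ) → ℝ) (hA : IsAM d A Hlim)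
    (p q : ℕ → ℕ) (hpmono : Monotone p) (hqmono : Monotone q)
    (hp : ∀ N, 0 < p N) (hq : ∀ N, 0 < q N)
    (hqtop : Tendsto (fun N => (q N : ℝ)) atTop atTop)
    (hqp : Tendsto (fun N => (q N : ℝ) / (p N : ℝ)) atTop (nhds 0))
    (hpN : Tendsto (fun N => (p N : ℝ) / (N : ℝ)) atTop (nhds 0))
    (kb : ℕ → ℕ) (hkb : ∀ N, kb N = (2 * N + 1) / (p N + q N))
    (Δ : (N : ℕ) → (Fin d → ℕ) → Finset (Fin d → ℤ))
    (hΔ : ∀ N j, Δ N j = Fintype.piFinset fun i =>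
      Finset.Icc (-(N : ℤ) + (j i : ℤ) * ((p N : ℤ) + q N))
        (-(N : ℤ) + (j i : ℤ) * ((p N : ℤ) + q N) + p N))
    (κ : Fin d → ℤ) :
    (∀ N : ℕ,
      0 ≤ (∑ j ∈ Fintype.piFinset fun _ : Fin d => Finset.range (kb N),
            HN d (A ∩ ↑(Δ N j)) N κ) ∧
      (∑ j ∈ Fintype.piFinset fun _ : Fin d => Finset.range (kb N),
            HN d (A ∩ ↑(Δ N j)) N κ) ≤ 1) ∧
    Tendsto
      (fun N => ∑ j ∈ Fintype.piFinset fun _ : Fin d => Finset.range (kb N),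
        HN d (A ∩ ↑(Δ N j)) N κ)
      atTop (nhds (Hlim κ)) :=
  HN_block_sums_converge_general A Hlim hA p q hp hq hqp hpN kb hkb Δ hΔ κ
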